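/- arXiv:1711.01668 — 6 statements merged into one kernel-verified Lean document; each statement's English description precedes it below -/
import Mathlib

section
/- Let f, g : {0,1}^ω → {0,1}^ω be homeomorphisms of Cantor space, each having only finitely many distinct restrictions f|_α (respectively g|_α) as α ranges over all finite binary sequences. Then the homeomorphism (f,g) defined by (f,g)(0ζ) = 0·f(ζ) and (f,g)(1ζ) = 1·g(ζ) also has only finitely many distinct restrictions. -/
/-- The Cantor space of infinite binary sequences. -/
abbrev Cantor : Type := ℕ → Bool

/-- Prepend a finite binary word to an infinite binary sequence. -/
def prepend (α : List Bool) (ψ : Cantor) : Cantor :=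
  fun n => if h : n < α.length then α.get ⟨n, h⟩ else ψ (n - α.length)

/-- The basic clopen cone `I_α` of sequences beginning with the finite word `α`. -/
def cone (α : List Bool) : Set Cantor :=
  {ψ | ∀ i (h : i < α.length), ψ i = α.get ⟨i, h⟩}

/-- An asynchronous binary transducer with state set `S` (the initial state `s0`,
the transition function `t` and the output function `o`). -/
structure Transducer (S : Type) where
  s0 : S
  t : S → Bool → S
  o : S → Bool → List Bool

/-- The extended transition function on finite binary words. -/
def Transducer.tStar {S : Type} (T : Transducer S) : S → List Bool → S
  | s, [] => s
  | s, b :: α => T.tStar (T.t s b) α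

/-- The extended output function on finite binary words. -/
def Transducer.oStar {S : Type} (T : Transducer S) : S → List Bool → List Bool
  | _, [] => []
  | s, b :: α => T.o s b ++ T.oStar (T.t s b) α

/-- The length-`n` prefix of an infinite binary sequence, as a finite word. -/
def prefixWord (ψ : Cantor) (n : ℕ) : List Bool := (List.range n).map ψ

/-- `l` is a prefix of the infinite sequence `ψ`. -/
def IsPrefixOf (l : List Bool) (ψ : Cantor) : Prop :=
  ∀ i (h : i < l.length), l.get ⟨i, h⟩ = ψ i

/-- The transducer `T` computes the map `f` on infinite binary sequences: on every input
`ψ` the finite outputs along the run are prefixes of `f ψ`, and their lengths tend to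
infinity, so that the infinite concatenated output is exactly `f ψ`. -/
def Transducer.Computes {S : Type} (T : Transducer S) (f : Cantor → Cantor) : Prop :=
  ∀ ψ : Cantor, (∀ n, IsPrefixOf (T.oStar T.s0 (prefixWord ψ n)) (f ψ)) ∧
    (∀ k, ∃ n, k ≤ (T.oStar T.s0 (prefixWord ψ n)).length)

/-- A homeomorphism of the Cantor space is rational if some asynchronous binary
transducer (with finitely many states) computes it. -/
def IsRational (f : Cantor ≃ₜ Cantor) : Prop :=
  ∃ (n : ℕ) (T : Transducer (Fin n)), T.Computes ⇑f

/-- `r` is the restriction `f|_α`: there is a finite word `β` (necessarily the longest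
common prefix of `f(I_α)`) with `f(αω) = β · r(ω)` for all `ω`, where maximality of `β`
is expressed by saying that the outputs of `r` do not all share their first digit. -/
def IsRestrictionAt (f : Cantor ≃ₜ Cantor) (α : List Bool) (r : Cantor → Cantor) : Prop :=
  ∃ β : List Bool, (∀ ψ : Cantor, f (prepend α ψ) = prepend β (r ψ)) ∧
    ∃ ψ ψ' : Cantor, r ψ 0 ≠ r ψ' 0

/-- The set of all restrictions of `f` as `α` ranges over finite binary words. -/
def restrictions (f : Cantor ≃ₜ Cantor) : Set (Cantor → Cantor) :=
  {r | ∃ α : List Bool, IsRestrictionAt f α r}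

/-- `f` has finitely many distinct restrictions. -/
def FinitelyManyRestrictions (f : Cantor ≃ₜ Cantor) : Prop :=
  (restrictions f).Finite

/-- The group of self-homeomorphisms of the Cantor space, with `(f * g) x = f (g x)`. -/
instance : Group (Cantor ≃ₜ Cantor) where
  mul f g := g.trans f
  one := Homeomorph.refl _
  inv := Homeomorph.symm
  mul_assoc _ _ _ := rfl
  one_mul _ := rfl
  mul_one _ := rfl
  inv_mul_cancel f := Homeomorph.ext fun x => f.symm_apply_apply x

/-- `k` is the homeomorphism `(f, g)`, acting as `f` on `I₀` and as `g` on `I₁`. -/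
def IsPair (k f g : Cantor ≃ₜ Cantor) : Prop :=
  (∀ ζ : Cantor, k (prepend [false] ζ) = prepend [false] (f ζ)) ∧
  (∀ ζ : Cantor, k (prepend [true] ζ) = prepend [true] (g ζ))

/-- `x₀` is the first generator of Thompson's group `F`. -/
def IsX0 (x₀ : Cantor ≃ₜ Cantor) : Prop :=
  (∀ ζ : Cantor, x₀ (prepend [false, false] ζ) = prepend [false] ζ) ∧
  (∀ ζ : Cantor, x₀ (prepend [false, true] ζ) = prepend [true, false] ζ) ∧
  (∀ ζ : Cantor, x₀ (prepend [true] ζ) = prepend [true, true] ζ)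

/-- `f` has small support: it is the identity outside a proper nonempty clopen set. -/
def HasSmallSupport (f : Cantor ≃ₜ Cantor) : Prop :=
  ∃ E : Set Cantor, IsClopen E ∧ E.Nonempty ∧ E ≠ Set.univ ∧ ∀ ψ ∉ E, f ψ = ψ

/-- A group `G` of homeomorphisms of the Cantor space is full if every homeomorphism
that locally agrees with `G` belongs to `G`. -/
def Full (G : Subgroup (Cantor ≃ₜ Cantor)) : Prop :=
  ∀ h : Cantor ≃ₜ Cantor,
    (∀ p : Cantor, ∃ U : Set Cantor, IsOpen U ∧ p ∈ U ∧ ∃ g ∈ G, ∀ x ∈ U, h x = g x) →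
    h ∈ G

/-- A group `G` of homeomorphisms of the Cantor space is flexible if for all proper
nonempty clopen sets `E₁, E₂` there is `g ∈ G` with `g(E₁) ⊆ E₂`. -/
def Flexible (G : Subgroup (Cantor ≃ₜ Cantor)) : Prop :=
  ∀ E₁ E₂ : Set Cantor, IsClopen E₁ → E₁.Nonempty → E₁ ≠ Set.univ →
    IsClopen E₂ → E₂.Nonempty → E₂ ≠ Set.univ →
    ∃ g ∈ G, ⇑g '' E₁ ⊆ E₂

/-- The map flipping every `p`-th binary digit (digits are indexed from 1, so the
digit at index `n : ℕ` is the `(n+1)`-st digit). -/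
def flipFun (p : ℕ) (ψ : Cantor) : Cantor :=
  fun n => if p ∣ (n + 1) then !(ψ n) else ψ n

/-! The restriction of `(f, g)` at the empty word is `(f, g)` itself, and its restriction at
`b :: α` is the restriction of `f` (if `b = 0`) or `g` (if `b = 1`) at `α`: the leading digit
`b` always belongs to the longest common prefix, and stripping it leaves the same remainder. -/

lemma prepend_nil (ψ : Cantor) : prepend [] ψ = ψ := by
  funext n; simp [prepend]

@[simp]
lemma prepend_cons_apply_zero (b : Bool) (β : List Bool) (ψ : Cantor) :
    prepend (b :: β) ψ 0 = b := by
  simp [prepend]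

lemma prepend_cons (b : Bool) (α : List Bool) (ψ : Cantor) :
    prepend (b :: α) ψ = prepend [b] (prepend α ψ) := by
  funext n
  cases n with
  | zero => simp
  | succ m => by_cases h : m < α.length <;> simp [prepend, h]

lemma prepend_singleton_injective (b : Bool) : Function.Injective (prepend [b]) :=
  fun _ _ h => funext fun n => by simpa [prepend] using congrFun h (n + 1)

lemma IsRestrictionAt.eq_of_nil {f : Cantor ≃ₜ Cantor} {r : Cantor → Cantor}
    (h : IsRestrictionAt f [] r) : r = f := by
  obtain ⟨β, hβ, -⟩ := h
  cases β with
  | nil => exact funext fun ψ => by simpa only [prepend_nil] using (hβ ψ).symm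
  | cons b β =>
    -- `f` is onto, so no digit is forced at the front of every output
    have h0 := congrFun (hβ (f.symm fun _ => !b)) 0
    simp [prepend_nil] at h0

lemma IsRestrictionAt.of_cons {k f : Cantor ≃ₜ Cantor} {b : Bool} {α : List Bool}
    {r : Cantor → Cantor} (hk : ∀ ζ, k (prepend [b] ζ) = prepend [b] (f ζ))
    (h : IsRestrictionAt k (b :: α) r) : IsRestrictionAt f α r := by
  obtain ⟨β, hβ, ψ₀, ψ₁, hne⟩ := h
  have hβ' (ψ : Cantor) : prepend [b] (f (prepend α ψ)) = prepend β (r ψ) := by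
    rw [← hk, ← prepend_cons, hβ]
  cases β with
  | nil =>
    have hb (ψ : Cantor) : r ψ 0 = b := by
      simpa [prepend_nil] using (congrFun (hβ' ψ) 0).symm
    exact absurd ((hb ψ₀).trans (hb ψ₁).symm) hne
  | cons c β =>
    obtain rfl : c = b := by simpa using (congrFun (hβ' ψ₀) 0).symm
    refine ⟨β, fun ψ => prepend_singleton_injective c ?_, ψ₀, ψ₁, hne⟩
    rw [hβ', prepend_cons]

lemma restrictions_subset_of_isPair {k f g : Cantor ≃ₜ Cantor} (hk : IsPair k f g) :
    restrictions k ⊆ insert ⇑k (restrictions f ∪ restrictions g) := by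
  rintro r ⟨α, hr⟩
  match α, hr with
  | [], hr => exact .inl hr.eq_of_nil
  | false :: α, hr => exact .inr (.inl ⟨α, hr.of_cons hk.1⟩)
  | true :: α, hr => exact .inr (.inr ⟨α, hr.of_cons hk.2⟩)

/-- if the homeomorphisms `f` and `g` have finitely many restrictions,
then so does the homeomorphism `(f, g)`. -/
theorem pair_finitelyManyRestrictions (f g k : Cantor ≃ₜ Cantor)
    (hf : FinitelyManyRestrictions f) (hg : FinitelyManyRestrictions g)
    (hk : IsPair k f g) : FinitelyManyRestrictions k :=
  ((hf.union hg).insert ⇑k).subset (restrictions_subset_of_isPair hk)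
end

section
/- Let h be a homeomorphism of {0,1}^ω, and suppose there is a partition of {0,1}^ω into finitely many basic clopen sets I_{α₁}, ..., I_{αₙ} and homeomorphisms g₁, ..., gₙ, each with finitely many distinct restrictions, such that h agrees with gᵢ on I_{αᵢ}. Then h has finitely many distinct restrictions. -/
/-!
A restriction `h|_β` is determined by `h` on the cone `I_β`, and the cone `I_β` meets `I_{αᵢ}`
only if `β` and `αᵢ` are comparable under the prefix order. So when `αᵢ` is a prefix of `β`,
`h|_β = gᵢ|_β`, and the remaining words `β` are the finitely many prefixes of the `αᵢ`,
each contributing at most one restriction.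
-/

lemma length_prefixWord (ψ : Cantor) (n : ℕ) : (prefixWord ψ n).length = n := by
  simp [prefixWord]

lemma take_prefixWord (ψ : Cantor) {m n : ℕ} (hmn : m ≤ n) :
    (prefixWord ψ n).take m = prefixWord ψ m := by
  rw [prefixWord, ← List.map_take, List.take_range, min_eq_left hmn, prefixWord]

lemma prefixWord_prefix_of_le (ψ : Cantor) {m n : ℕ} (hmn : m ≤ n) :
    prefixWord ψ m <+: prefixWord ψ n :=
  take_prefixWord ψ hmn ▸ List.take_prefix _ _

lemma mem_cone_iff_prefixWord_eq {α : List Bool} {ψ : Cantor} :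
    ψ ∈ cone α ↔ prefixWord ψ α.length = α := by
  simp only [cone, Set.mem_ofPred_eq, List.ext_get_iff, length_prefixWord, true_and]
  simp [prefixWord]

lemma prepend_mem_cone (α : List Bool) (ψ : Cantor) : prepend α ψ ∈ cone α := by
  intro i hi
  simp [prepend, hi]

lemma cone_subset_cone_of_prefix {α α' : List Bool} (h : α <+: α') : cone α' ⊆ cone α := by
  intro ψ hψ
  rw [mem_cone_iff_prefixWord_eq] at hψ ⊢
  rw [List.prefix_iff_eq_take.mp h, ← hψ, take_prefixWord ψ h.length_le, length_prefixWord]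

lemma prefix_or_prefix_of_mem_cone {α α' : List Bool} {ψ : Cantor}
    (h : ψ ∈ cone α) (h' : ψ ∈ cone α') : α <+: α' ∨ α' <+: α := by
  rw [mem_cone_iff_prefixWord_eq] at h h'
  rw [← h, ← h']
  rcases le_total α.length α'.length with hle | hle
  · exact Or.inl (prefixWord_prefix_of_le ψ hle)
  · exact Or.inr (prefixWord_prefix_of_le ψ hle)

lemma prepend_apply_of_lt (β : List Bool) (ψ : Cantor) {i : ℕ} (hi : i < β.length) :
    prepend β ψ i = β.get ⟨i, hi⟩ := by
  simp [prepend, hi]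

lemma prepend_apply_length_add (β : List Bool) (ψ : Cantor) (m : ℕ) :
    prepend β ψ (β.length + m) = ψ m := by
  simp [prepend]

lemma length_le_of_prepend_eq {β β' : List Bool} {r r' : Cantor → Cantor}
    (hprep : ∀ ψ, prepend β (r ψ) = prepend β' (r' ψ)) (hr : ∃ ψ ψ', r ψ 0 ≠ r ψ' 0) :
    β'.length ≤ β.length := by
  by_contra! hlt
  have hconst : ∀ ψ, r ψ 0 = β'.get ⟨β.length, hlt⟩ := fun ψ => by
    rw [← prepend_apply_length_add β (r ψ) 0, add_zero, hprep, prepend_apply_of_lt β' _ hlt]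
  obtain ⟨ψ, ψ', hne⟩ := hr
  exact hne ((hconst ψ).trans (hconst ψ').symm)

lemma setOf_isRestrictionAt_subsingleton (f : Cantor ≃ₜ Cantor) (α : List Bool) :
    {r | IsRestrictionAt f α r}.Subsingleton := by
  rintro r ⟨β, hβ, hr⟩ r' ⟨β', hβ', hr'⟩
  have hprep : ∀ ψ, prepend β (r ψ) = prepend β' (r' ψ) := fun ψ => by rw [← hβ, ← hβ']
  have hlen : β.length = β'.length :=
    le_antisymm (length_le_of_prepend_eq (fun ψ => (hprep ψ).symm) hr')
      (length_le_of_prepend_eq hprep hr)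
  funext ψ m
  rw [← prepend_apply_length_add β (r ψ) m, hprep, hlen, prepend_apply_length_add]

lemma IsRestrictionAt.of_eqOn {f g : Cantor ≃ₜ Cantor} {α : List Bool} {r : Cantor → Cantor}
    (hfg : Set.EqOn f g (cone α)) (hr : IsRestrictionAt f α r) : IsRestrictionAt g α r := by
  obtain ⟨β, hβ, hne⟩ := hr
  exact ⟨β, fun ψ => (hfg (prepend_mem_cone α ψ)).symm.trans (hβ ψ), hne⟩

/-- if `h` agrees on each piece of a finite partition into basic clopen
cones with a homeomorphism having finitely many restrictions, then `h` has finitely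
many restrictions. -/
theorem finitelyManyRestrictions_of_partition (h : Cantor ≃ₜ Cantor) (n : ℕ)
    (α : Fin n → List Bool) (g : Fin n → (Cantor ≃ₜ Cantor))
    (hg : ∀ i, FinitelyManyRestrictions (g i))
    (hpart : ∀ ψ : Cantor, ∃! i, ψ ∈ cone (α i))
    (hagree : ∀ i, ∀ ψ ∈ cone (α i), h ψ = g i ψ) :
    FinitelyManyRestrictions h := by
  have hcover : restrictions h ⊆ (⋃ i, restrictions (g i)) ∪
      ⋃ i, ⋃ a ∈ (α i).inits, {r | IsRestrictionAt h a r} := by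
    rintro r ⟨β, hr⟩
    obtain ⟨i, hi, -⟩ := hpart (prepend β fun _ => false)
    rcases prefix_or_prefix_of_mem_cone hi (prepend_mem_cone β _) with hαβ | hβα
    · have hEq : Set.EqOn h (g i) (cone β) := fun ψ hψ =>
        hagree i ψ (cone_subset_cone_of_prefix hαβ hψ)
      exact Or.inl (Set.mem_iUnion.mpr ⟨i, β, hr.of_eqOn hEq⟩)
    · exact Or.inr <| Set.mem_iUnion.mpr
        ⟨i, Set.mem_iUnion₂.mpr ⟨β, (List.mem_inits _ _).mpr hβα, hr⟩⟩
  refine ((Set.finite_iUnion hg).union (Set.finite_iUnion fun i => ?_)).subset hcover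
  exact (List.finite_toSet _).biUnion fun a _ => (setOf_isRestrictionAt_subsingleton h a).finite
end

section
/- For every rational homeomorphism f of {0,1}^ω there exists a rational homeomorphism g such that g(0ζ) = 0·f(ζ) and g(1ζ) = 1·g(ζ) for all ζ ∈ {0,1}^ω, i.e., g = (f, g). -/
/-!
The map `g = (f, g)` is forced digit by digit: `g` copies a leading run of `1`s, copies the
first `0`, and then applies `f` to the rest. It is continuous with inverse `(f⁻¹, ·)` built the
same way, and a transducer for `f` becomes one for `g` after adding a fresh initial state that
echoes its input, stays put on `1` and hands over to `f`'s initial state on `0`.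
-/

def shift (ψ : Cantor) : Cantor := fun n => ψ (n + 1)

theorem continuous_shift : Continuous shift :=
  continuous_pi fun n => continuous_apply (n + 1)

def pairFix (h : Cantor → Cantor) : Cantor → ℕ → Bool
  | ψ, 0 => ψ 0
  | ψ, n + 1 => cond (ψ 0) (pairFix h (shift ψ) n) (h (shift ψ) n)

section pairFix

variable (h h' : Cantor → Cantor)

theorem pairFix_zero (ψ : Cantor) : pairFix h ψ 0 = ψ 0 := rfl

theorem shift_pairFix (ψ : Cantor) :
    shift (pairFix h ψ) = cond (ψ 0) (pairFix h (shift ψ)) (h (shift ψ)) := by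
  funext n
  show cond (ψ 0) _ _ = _
  cases ψ 0 <;> rfl

theorem pairFix_prepend_false (ζ : Cantor) :
    pairFix h (prepend [false] ζ) = prepend [false] (h ζ) := by
  funext n; cases n <;> rfl

theorem pairFix_prepend_true (ζ : Cantor) :
    pairFix h (prepend [true] ζ) = prepend [true] (pairFix h ζ) := by
  funext n; cases n <;> rfl

theorem pairFix_comp (ψ : Cantor) : pairFix h (pairFix h' ψ) = pairFix (h ∘ h') ψ := by
  funext n
  induction n generalizing ψ with
  | zero => rfl
  | succ n ih =>
    show shift (pairFix h (pairFix h' ψ)) n = shift (pairFix (h ∘ h') ψ) n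
    rw [shift_pairFix, shift_pairFix, pairFix_zero, shift_pairFix]
    cases ψ 0
    · rfl
    · exact ih _

theorem pairFix_id (ψ : Cantor) : pairFix id ψ = ψ := by
  funext n
  induction n generalizing ψ with
  | zero => rfl
  | succ n ih =>
    show shift (pairFix id ψ) n = shift ψ n
    rw [shift_pairFix]
    cases ψ 0
    · rfl
    · exact ih _

theorem continuous_pairFix (hc : Continuous h) : Continuous (pairFix h) := by
  refine continuous_pi fun n => ?_
  induction n with
  | zero => exact continuous_apply 0
  | succ n ih =>
    have hcond : Continuous fun p : Bool × Bool × Bool => cond p.1 p.2.1 p.2.2 :=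
      continuous_of_discreteTopology
    exact hcond.comp <| (continuous_apply 0).prodMk <|
      (ih.comp continuous_shift).prodMk ((continuous_apply n).comp (hc.comp continuous_shift))

end pairFix

def pairFixHomeo (f : Cantor ≃ₜ Cantor) : Cantor ≃ₜ Cantor where
  toFun := pairFix f
  invFun := pairFix f.symm
  left_inv ψ := by
    rw [pairFix_comp, f.symm_comp_self, pairFix_id]
  right_inv ψ := by
    rw [pairFix_comp, f.self_comp_symm, pairFix_id]
  continuous_toFun := continuous_pairFix _ f.continuous
  continuous_invFun := continuous_pairFix _ f.symm.continuous

theorem isPair_pairFixHomeo (f : Cantor ≃ₜ Cantor) :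
    IsPair (pairFixHomeo f) f (pairFixHomeo f) :=
  ⟨pairFix_prepend_false f, pairFix_prepend_true f⟩

theorem prefixWord_succ (ψ : Cantor) (n : ℕ) :
    prefixWord ψ (n + 1) = ψ 0 :: prefixWord (shift ψ) n := by
  simp only [prefixWord, List.range_succ_eq_map, List.map_cons, List.map_map]
  rfl

theorem IsPrefixOf.cons {l : List Bool} {ψ : Cantor} (hl : IsPrefixOf l (shift ψ)) :
    IsPrefixOf (ψ 0 :: l) ψ := by
  rintro (_ | i) hi
  · rfl
  · exact hl i (Nat.lt_of_succ_lt_succ hi)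

namespace Transducer

variable {n : ℕ} (T : Transducer (Fin n))

def pairFix : Transducer (Fin (n + 1)) where
  s0 := Fin.last n
  t := Fin.lastCases (fun b => cond b (Fin.last n) T.s0.castSucc) fun s b => (T.t s b).castSucc
  o := Fin.lastCases (fun b => [b]) T.o

theorem pairFix_t_last (b : Bool) :
    T.pairFix.t (Fin.last n) b = cond b (Fin.last n) T.s0.castSucc := by
  simp [pairFix]

theorem pairFix_t_castSucc (s : Fin n) (b : Bool) :
    T.pairFix.t s.castSucc b = (T.t s b).castSucc := by
  simp [pairFix]

theorem pairFix_o_last (b : Bool) : T.pairFix.o (Fin.last n) b = [b] := by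
  simp [pairFix]

theorem pairFix_o_castSucc (s : Fin n) (b : Bool) : T.pairFix.o s.castSucc b = T.o s b := by
  simp [pairFix]

theorem oStar_pairFix_castSucc (α : List Bool) (s : Fin n) :
    T.pairFix.oStar s.castSucc α = T.oStar s α := by
  induction α generalizing s with
  | nil => rfl
  | cons b α ih => rw [oStar, oStar, pairFix_o_castSucc, pairFix_t_castSucc, ih]

theorem oStar_pairFix_prefixWord_succ (ψ : Cantor) (N : ℕ) :
    T.pairFix.oStar (Fin.last n) (prefixWord ψ (N + 1)) =
      ψ 0 :: cond (ψ 0) (T.pairFix.oStar (Fin.last n) (prefixWord (shift ψ) N))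
        (T.oStar T.s0 (prefixWord (shift ψ) N)) := by
  rw [prefixWord_succ, oStar, pairFix_o_last, pairFix_t_last]
  cases ψ 0
  · exact congrArg _ (T.oStar_pairFix_castSucc _ _)
  · rfl

variable {T} {f : Cantor → Cantor}

theorem isPrefixOf_oStar_pairFix (hT : T.Computes f) (N : ℕ) (ψ : Cantor) :
    IsPrefixOf (T.pairFix.oStar (Fin.last n) (prefixWord ψ N)) (_root_.pairFix f ψ) := by
  induction N generalizing ψ with
  | zero => intro i hi; exact absurd hi (Nat.not_lt_zero i)
  | succ N ih =>
    rw [oStar_pairFix_prefixWord_succ]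
    refine IsPrefixOf.cons (ψ := _root_.pairFix f ψ) ?_
    rw [shift_pairFix]
    cases ψ 0
    · exact (hT _).1 N
    · exact ih _

theorem exists_le_length_oStar_pairFix (hT : T.Computes f) (k : ℕ) (ψ : Cantor) :
    ∃ N, k ≤ (T.pairFix.oStar (Fin.last n) (prefixWord ψ N)).length := by
  induction k generalizing ψ with
  | zero => exact ⟨0, Nat.zero_le _⟩
  | succ k ih =>
    obtain ⟨N, hN⟩ : ∃ N, k ≤ (cond (ψ 0) (T.pairFix.oStar (Fin.last n)
        (prefixWord (shift ψ) N)) (T.oStar T.s0 (prefixWord (shift ψ) N))).length := by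
      cases ψ 0
      · exact (hT (shift ψ)).2 k
      · exact ih (shift ψ)
    exact ⟨N + 1, by simpa [oStar_pairFix_prefixWord_succ] using hN⟩

theorem Computes.pairFix (hT : T.Computes f) : T.pairFix.Computes (_root_.pairFix f) :=
  fun ψ => ⟨fun N => isPrefixOf_oStar_pairFix hT N ψ,
    fun k => exists_le_length_oStar_pairFix hT k ψ⟩

end Transducer

/-- for every rational homeomorphism `f` there is a rational
homeomorphism `g` with `g = (f, g)`. -/
theorem exists_pair_fixed_point (f : Cantor ≃ₜ Cantor) (hf : IsRational f) :
    ∃ g : Cantor ≃ₜ Cantor, IsRational g ∧ IsPair g f g := by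
  obtain ⟨n, T, hT⟩ := hf
  exact ⟨pairFixHomeo f, ⟨n + 1, T.pairFix, hT.pairFix⟩, isPair_pairFixHomeo f⟩
end

section
/- Let x₀ be the homeomorphism of {0,1}^ω defined by x₀(00ζ) = 0ζ, x₀(01ζ) = 10ζ, x₀(1ζ) = 11ζ. Let g, h be homeomorphisms of {0,1}^ω with h = (g, h). Then x₀⁻¹ ∘ (1, h) ∘ x₀ = ((1, g), 1) ∘ (1, h), where 1 denotes the identity. Consequently ((1,g),1) is a commutator x₀⁻¹ k x₀ k⁻¹ with k = (1,h). -/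
/-!
Writing both sides of `x₀⁻¹ k x₀ = w k` as `k x₀ = x₀ w k`, it suffices to compare them on the
three cones `00`, `01`, `1` on which `x₀` merely rewrites a prefix. There the pair decompositions
reduce both sides to `0ζ`, `10 g(ζ)` and `11 h(ζ)` respectively; the middle case is where
`h = (g, h)` enters, through `k(10ζ) = 1 h(0ζ) = 10 g(ζ)`. The commutator form follows in the group.
-/

lemma prepend_prepend (α β : List Bool) (ζ : Cantor) :
    prepend α (prepend β ζ) = prepend (α ++ β) ζ := by
  funext n
  simp only [prepend, List.length_append, List.get_eq_getElem, List.getElem_append]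
  by_cases hα : n < α.length
  · simp [hα, Nat.lt_add_right β.length hα]
  · by_cases hβ : n - α.length < β.length
    · simp [hα, hβ, Nat.sub_lt_iff_lt_add' (Nat.le_of_not_lt hα) |>.mp hβ]
    · have hαβ : ¬n < α.length + β.length := by omega
      simp [hα, hβ, hαβ, Nat.sub_sub]

lemma prepend_pair (a b : Bool) (ζ : Cantor) :
    prepend [a, b] ζ = prepend [a] (prepend [b] ζ) :=
  (prepend_prepend [a] [b] ζ).symm

lemma prepend_head_tail (ψ : Cantor) : prepend [ψ 0] (fun n => ψ (n + 1)) = ψ := by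
  funext n
  cases n <;> rfl

lemma forall_prepend_singleton {P : Cantor → Prop} :
    (∀ ψ, P ψ) ↔ ∀ b ζ, P (prepend [b] ζ) :=
  ⟨fun h _ _ => h _, fun h ψ => prepend_head_tail ψ ▸ h _ _⟩

lemma funext_cones_00_01_1 {X : Type*} {f f' : Cantor → X}
    (h00 : ∀ ζ, f (prepend [false, false] ζ) = f' (prepend [false, false] ζ))
    (h01 : ∀ ζ, f (prepend [false, true] ζ) = f' (prepend [false, true] ζ))
    (h1 : ∀ ζ, f (prepend [true] ζ) = f' (prepend [true] ζ)) : f = f' := by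
  funext ψ
  revert ψ
  rw [forall_prepend_singleton]
  rintro (_ | _) ζ
  · revert ζ
    rw [forall_prepend_singleton]
    rintro (_ | _) ζ <;> simp only [← prepend_pair, h00, h01]
  · exact h1 ζ

lemma IsPair.mul_x0_eq {x₀ g h k u w : Cantor ≃ₜ Cantor} (hk : IsPair k 1 h) (hx : IsX0 x₀)
    (hh : IsPair h g h) (hu : IsPair u 1 g) (hw : IsPair w u 1) :
    k * x₀ = x₀ * (w * k) := by
  obtain ⟨hx00, hx01, hx1⟩ := hx
  simp only [prepend_pair] at hx00 hx01 hx1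
  refine DFunLike.coe_injective <|
    funext_cones_00_01_1 (fun ζ => ?_) (fun ζ => ?_) (fun ζ => ?_) <;>
  simp only [Homeomorph.mul_apply, Homeomorph.one_apply, prepend_pair, hx00, hx01, hx1,
    hk.1, hk.2, hh.1, hh.2, hu.1, hu.2, hw.1, hw.2]

/-- if `h = (g, h)`, `k = (1, h)`, `u = (1, g)` and `w = ((1, g), 1)`,
then `x₀⁻¹ k x₀ = w k`, and consequently `w` is the commutator `x₀⁻¹ k x₀ k⁻¹`. -/
theorem conjugation_identity (x₀ g h k u w : Cantor ≃ₜ Cantor) (hx : IsX0 x₀)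
    (hh : IsPair h g h) (hk : IsPair k 1 h) (hu : IsPair u 1 g) (hw : IsPair w u 1) :
    x₀⁻¹ * k * x₀ = w * k ∧ w = x₀⁻¹ * k * x₀ * k⁻¹ := by
  have hconj : x₀⁻¹ * k * x₀ = w * k := by
    rw [mul_assoc, inv_mul_eq_iff_eq_mul]
    exact hk.mul_x0_eq hx hh hu hw
  exact ⟨hconj, by rw [hconj, mul_inv_cancel_right]⟩
end

section
/- Let G be a full, flexible group of homeomorphisms of Cantor space {0,1}^ω such that: (1) for all g ∈ G, both (1,g) and (g,1) lie in G, and every element of G supported on I₀ or I₁ has this form; (2) for all g ∈ G there exists h ∈ G with h = (g,h); (3) the first generator x₀ of Thompson's group F lies in G. Then G is simple. -/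
/-!
Let `N` be a nontrivial normal subgroup of `G` and `g₀ ∈ N` a nontrivial element; it moves some
nonempty clopen set `E` off itself. If `a, b` are supported in `E`, then `c = g₀ b⁻¹ g₀⁻¹` is
supported off `E` and commutes with `a`, so `⁅a, b⁆ = ⁅a, b c⁆ = ⁅a, ⁅b, g₀⁆⁆ ∈ N`; by flexibility
the same holds for `a, b` supported in any proper clopen set.

An element `u` supported on `I₀₁` has the form `((1, v), 1)`. With `w = (v, w)`, `W = (1, w)` and
`t = (x₀, 1)⁻¹ x₀` one checks `t (W u) t⁻¹ = W`, hence `u = ⁅t, (W u)⁻¹⁆`, where `t` and `W u` both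
fix `I₀₀₀`. So `N` contains every element supported on `I₀₁`, and by flexibility every element with
small support. Finally, by fullness every `g ∈ G` is a product of two elements with small support:
if `C` and `g C` are disjoint clopen sets, the involution `r` that is `g` on `C` and `g⁻¹` on `g C`
lies in `G`, and `r⁻¹ g` fixes `C`.
-/

open Set
open scoped commutatorElement

namespace Cantor

def cons (b : Bool) (ψ : Cantor) : Cantor
  | 0 => b
  | n + 1 => ψ n

@[simp] lemma cons_zero (b : Bool) (ψ : Cantor) : cons b ψ 0 = b := rfl

@[simp] lemma cons_succ (b : Bool) (ψ : Cantor) (n : ℕ) : cons b ψ (n + 1) = ψ n := rfl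

@[simp] lemma cons_inj {b c : Bool} {ψ φ : Cantor} : cons b ψ = cons c φ ↔ b = c ∧ ψ = φ := by
  refine ⟨fun h => ⟨congrFun h 0, funext fun n => congrFun h (n + 1)⟩, ?_⟩
  rintro ⟨rfl, rfl⟩
  rfl

lemma exists_eq_cons (ψ : Cantor) : ∃ b ζ, ψ = cons b ζ :=
  ⟨ψ 0, fun n => ψ (n + 1), funext fun n => by cases n <;> rfl⟩

@[simp] lemma prepend_nil (ψ : Cantor) : prepend [] ψ = ψ := rfl

@[simp] lemma prepend_cons (b : Bool) (α : List Bool) (ψ : Cantor) :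
    prepend (b :: α) ψ = cons b (prepend α ψ) := by
  funext n
  cases n <;> simp [prepend, cons]

@[simp] lemma mem_cone_nil (ψ : Cantor) : ψ ∈ cone [] := fun _ h => absurd h (Nat.not_lt_zero _)

@[simp] lemma cons_mem_cone_cons {b c : Bool} {α : List Bool} {ψ : Cantor} :
    cons b ψ ∈ cone (c :: α) ↔ b = c ∧ ψ ∈ cone α := by
  simp only [cone, mem_ofPred_eq, List.length_cons]
  refine ⟨fun h => ⟨h 0 (Nat.succ_pos _), fun i hi => h (i + 1) (Nat.succ_lt_succ hi)⟩, ?_⟩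
  rintro ⟨rfl, h⟩ (_ | i) hi
  · rfl
  · exact h i (Nat.lt_of_succ_lt_succ hi)

lemma mem_cone_iff {α : List Bool} {ψ : Cantor} : ψ ∈ cone α ↔ ∃ ζ, ψ = prepend α ζ := by
  induction α generalizing ψ with
  | nil => simp
  | cons c α ih =>
    obtain ⟨b, ψ, rfl⟩ := exists_eq_cons ψ
    simp [ih]

lemma prepend_mem_cone (α : List Bool) (ζ : Cantor) : prepend α ζ ∈ cone α :=
  mem_cone_iff.2 ⟨ζ, rfl⟩

lemma isClopen_cone (α : List Bool) : IsClopen (cone α) := by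
  have : cone α = ⋂ i : Fin α.length, (fun ψ : Cantor => ψ i) ⁻¹' {α.get i} := by
    ext ψ
    simp [cone, Fin.forall_iff]
  rw [this]
  exact isClopen_iInter_of_finite fun i => (isClopen_discrete _).preimage (continuous_apply _)

lemma cone_nonempty (α : List Bool) : (cone α).Nonempty :=
  ⟨prepend α fun _ => false, prepend_mem_cone α _⟩

lemma cone_cons_ne_univ (b : Bool) (α : List Bool) : cone (b :: α) ≠ univ :=
  (ne_univ_iff_exists_notMem _).2 ⟨cons (!b) fun _ => false, by simp⟩

end Cantor

section SupportedOn

variable {H X : Type*} [Group H] [MulAction H X] {a b t : H} {S T : Set X}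

def SupportedOn (a : H) (S : Set X) : Prop := ∀ x ∉ S, a • x = x

lemma SupportedOn.smul_mem (ha : SupportedOn a S) {x : X} (hx : x ∈ S) : a • x ∈ S := by
  by_contra h
  exact h (by rwa [smul_left_cancel a (ha _ h)])

lemma SupportedOn.inv (ha : SupportedOn a S) : SupportedOn a⁻¹ S := fun x hx =>
  inv_smul_eq_iff.2 (ha x hx).symm

lemma SupportedOn.conj (ha : SupportedOn a S) (ht : MapsTo (t • ·) S T) :
    SupportedOn (t * a * t⁻¹) T := by
  intro x hx
  have : t⁻¹ • x ∉ S := fun h => hx (by simpa using ht h)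
  rw [mul_smul, mul_smul, ha _ this, smul_inv_smul]

lemma SupportedOn.commute [FaithfulSMul H X] (ha : SupportedOn a S) (hb : SupportedOn b Sᶜ) :
    Commute a b := by
  refine eq_of_smul_eq_smul (α := X) fun x => ?_
  rw [mul_smul, mul_smul]
  by_cases hx : x ∈ S
  · rw [hb x (not_not.2 hx), hb _ (not_not.2 (ha.smul_mem hx))]
  · rw [ha x hx, ha _ (hb.smul_mem hx)]

theorem commutatorElement_mem_of_supportedOn [FaithfulSMul H X] {N : Subgroup H} (hN : N.Normal)
    {g₀ : H} (hg₀ : g₀ ∈ N) {E : Set X} (hE : MapsTo (g₀ • ·) E Eᶜ)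
    (ha : SupportedOn a E) (hb : SupportedOn b E) : ⁅a, b⁆ ∈ N := by
  set c := g₀ * b⁻¹ * g₀⁻¹
  have hac : Commute a c := ha.commute (hb.inv.conj hE)
  have hbc : b * c ∈ N := by
    rw [show b * c = b * g₀ * b⁻¹ * g₀⁻¹ by simp only [c]; group]
    exact N.mul_mem (hN.conj_mem g₀ hg₀ b) (N.inv_mem hg₀)
  have : ⁅a, b⁆ = a * (b * c) * a⁻¹ * (b * c)⁻¹ := by
    rw [commutatorElement_def, mul_inv_rev,
      show a * (b * c) * a⁻¹ * (c⁻¹ * b⁻¹) = a * b * (c * a⁻¹) * c⁻¹ * b⁻¹ by group,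
      (hac.symm.inv_right).eq]
    group
  rw [this]
  exact N.mul_mem (hN.conj_mem _ hbc a) (N.inv_mem hbc)

end SupportedOn

theorem exists_isClopen_disjoint_image {X : Type*} [TopologicalSpace X] [T2Space X]
    [CompactSpace X] [TotallyDisconnectedSpace X] {f : X → X} (hf : Continuous f) {x ζ : X}
    (hx : f x ≠ x) (hζx : ζ ≠ x) (hζfx : ζ ≠ f x) :
    ∃ E, IsClopen E ∧ x ∈ E ∧ Disjoint E (f '' E) ∧ ζ ∉ E ∪ f '' E := by
  obtain ⟨U, V, hU, hV, hxU, hfxV, hUV⟩ := t2_separation hx.symm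
  have hxO : x ∈ U ∩ {ζ}ᶜ ∩ f ⁻¹' (V ∩ {ζ}ᶜ) := ⟨⟨hxU, Ne.symm hζx⟩, hfxV, Ne.symm hζfx⟩
  have hO : IsOpen (U ∩ {ζ}ᶜ ∩ f ⁻¹' (V ∩ {ζ}ᶜ)) :=
    (hU.inter isOpen_compl_singleton).inter ((hV.inter isOpen_compl_singleton).preimage hf)
  obtain ⟨E, hE, hxE, hEO⟩ := isTopologicalBasis_isClopen.exists_subset_of_mem_open hxO hO
  have hfE : f '' E ⊆ V ∩ {ζ}ᶜ := image_subset_iff.2 fun y hy => (hEO hy).2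
  refine ⟨E, hE, hxE, hUV.mono (fun y hy => (hEO hy).1.1) (hfE.trans inter_subset_left), ?_⟩
  rintro (h | h)
  · exact (hEO h).1.2 rfl
  · exact (hfE h).2 rfl

namespace Cantor

instance : MulAction (Cantor ≃ₜ Cantor) Cantor where
  smul f x := f x
  one_smul _ := rfl
  mul_smul _ _ _ := rfl

instance : FaithfulSMul (Cantor ≃ₜ Cantor) Cantor := ⟨fun h => Homeomorph.ext h⟩

lemma exists_isClopen_disjoint_image_of_ne_one {f : Cantor ≃ₜ Cantor} (hf : f ≠ 1) :
    ∃ E : Set Cantor, IsClopen E ∧ E.Nonempty ∧ Disjoint E (f '' E) ∧ E ∪ f '' E ≠ univ := by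
  classical
  obtain ⟨x, hx⟩ : ∃ x, f x ≠ x := by
    by_contra! h
    exact hf (Homeomorph.ext h)
  obtain ⟨ζ, hζ⟩ := Infinite.exists_notMem_finset {x, f x}
  simp only [Finset.mem_insert, Finset.mem_singleton, not_or] at hζ
  obtain ⟨E, hE, hxE, hdisj, hζE⟩ := exists_isClopen_disjoint_image f.continuous hx hζ.1 hζ.2
  exact ⟨E, hE, ⟨x, hxE⟩, hdisj, ne_univ_iff_exists_notMem _ |>.2 ⟨ζ, hζE⟩⟩

end Cantor

open Cantor

section FullFlexible

variable {G : Subgroup (Cantor ≃ₜ Cantor)}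

lemma Full.exists_coe_eq_of_involutive (hG : Full G) {ρ : Cantor → Cantor}
    (hρ : Function.Involutive ρ) (hloc : ∀ p, ∃ U, IsOpen U ∧ p ∈ U ∧ ∃ k ∈ G, EqOn ρ k U) :
    ∃ r ∈ G, ⇑r = ρ := by
  have hcont : Continuous ρ := continuous_iff_continuousAt.2 fun p => by
    obtain ⟨U, hU, hpU, k, -, hk⟩ := hloc p
    exact k.continuous.continuousAt.congr (hk.symm.eventuallyEq_of_mem (hU.mem_nhds hpU))
  exact ⟨⟨hρ.toPerm ρ, hcont, hcont⟩, hG _ hloc, rfl⟩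

lemma Full.exists_supportedOn_eqOn (hG : Full G) {g : Cantor ≃ₜ Cantor} (hg : g ∈ G)
    {C : Set Cantor} (hC : IsClopen C) (hdisj : Disjoint C (g '' C)) :
    ∃ r ∈ G, SupportedOn r (C ∪ g '' C) ∧ EqOn r g C := by
  classical
  set D := g '' C
  have hD : IsClopen D := ⟨g.isClosed_image.2 hC.1, g.isOpen_image.2 hC.2⟩
  have hgD : ∀ {x}, x ∈ C → g x ∈ D := fun hx => mem_image_of_mem g hx
  have hgD' : ∀ {x}, x ∈ D → g.symm x ∈ C := by
    rintro _ ⟨x, hx, rfl⟩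
    simpa using hx
  have hDC : ∀ {x}, x ∈ D → x ∉ C := fun hx hxC => hdisj.notMem_of_mem_left hxC hx
  let ρ := C.piecewise g (D.piecewise g.symm id)
  have hρC : ∀ {x}, x ∈ C → ρ x = g x := fun hx => piecewise_eq_of_mem _ _ _ hx
  have hρD : ∀ {x}, x ∈ D → ρ x = g.symm x := fun hx => by
    simp [ρ, hDC hx, piecewise_eq_of_mem _ _ _ hx]
  have hρ : ∀ {x}, x ∉ C ∪ D → ρ x = x := fun hx => by
    simp_all [ρ, piecewise_eq_of_notMem]
  have hinv : Function.Involutive ρ := by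
    intro x
    by_cases hxC : x ∈ C
    · rw [hρC hxC, hρD (hgD hxC), g.symm_apply_apply]
    by_cases hxD : x ∈ D
    · rw [hρD hxD, hρC (hgD' hxD), g.apply_symm_apply]
    · have hx : x ∉ C ∪ D := by simp [hxC, hxD]
      rw [hρ hx, hρ hx]
  have hloc : ∀ p, ∃ U, IsOpen U ∧ p ∈ U ∧ ∃ k ∈ G, EqOn ρ k U := by
    intro p
    by_cases hpC : p ∈ C
    · exact ⟨C, hC.isOpen, hpC, g, hg, fun x hx => hρC hx⟩
    by_cases hpD : p ∈ D
    · exact ⟨D, hD.isOpen, hpD, g⁻¹, G.inv_mem hg, fun x hx => hρD hx⟩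
    · exact ⟨(C ∪ D)ᶜ, (hC.union hD).isClosed.isOpen_compl, by simp [hpC, hpD], 1, G.one_mem,
        fun x hx => hρ hx⟩
  obtain ⟨r, hrG, hr⟩ := hG.exists_coe_eq_of_involutive hinv hloc
  exact ⟨r, hrG, fun x hx => (congrFun hr x).trans (hρ hx), fun x hx => (congrFun hr x).trans (hρC hx)⟩

lemma hasSmallSupport_one : HasSmallSupport 1 :=
  ⟨cone [false], isClopen_cone _, cone_nonempty _, cone_cons_ne_univ _ _, fun _ _ => rfl⟩

theorem Full.exists_hasSmallSupport_mul_eq (hG : Full G) {g : Cantor ≃ₜ Cantor} (hg : g ∈ G) :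
    ∃ a ∈ G, ∃ b ∈ G, HasSmallSupport a ∧ HasSmallSupport b ∧ a * b = g := by
  rcases eq_or_ne g 1 with rfl | hg1
  · exact ⟨1, G.one_mem, 1, G.one_mem, hasSmallSupport_one, hasSmallSupport_one, mul_one 1⟩
  obtain ⟨C, hC, hCne, hdisj, hCD⟩ := exists_isClopen_disjoint_image_of_ne_one hg1
  obtain ⟨r, hrG, hr, hrg⟩ := hG.exists_supportedOn_eqOn hg hC hdisj
  have hD : IsClopen (g '' C) := ⟨g.isClosed_image.2 hC.1, g.isOpen_image.2 hC.2⟩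
  have hCuniv : C ≠ univ := ne_top_of_le_ne_top hCD subset_union_left
  refine ⟨r, hrG, r⁻¹ * g, G.mul_mem (G.inv_mem hrG) hg,
    ⟨_, hC.union hD, hCne.mono subset_union_left, hCD, hr⟩,
    ⟨Cᶜ, hC.compl, nonempty_compl.2 hCuniv, compl_ne_univ.2 hCne, fun x hx => ?_⟩,
    mul_inv_cancel_left r g⟩
  rw [notMem_compl_iff] at hx
  change r⁻¹ (g x) = x
  rw [← hrg hx]
  exact r.symm_apply_apply x

theorem Flexible.commutatorElement_mem (hG : Flexible G) {N : Subgroup G} (hN : N.Normal)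
    {g₀ : G} (hg₀ : g₀ ∈ N) {E F : Set Cantor} (hE : IsClopen E) (hEne : E.Nonempty)
    (hEuniv : E ≠ univ) (hg₀E : MapsTo (g₀ • ·) E Eᶜ) (hF : IsClopen F) (hFne : F.Nonempty)
    (hFuniv : F ≠ univ) {a b : G} (ha : SupportedOn a F) (hb : SupportedOn b F) :
    ⁅a, b⁆ ∈ N := by
  obtain ⟨t, htG, htFE⟩ := hG F E hF hFne hFuniv hE hEne hEuniv
  let τ : G := ⟨t, htG⟩
  have hτ : MapsTo (τ • ·) F E := mapsTo_iff_image_subset.2 htFE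
  have h := commutatorElement_mem_of_supportedOn hN hg₀ hg₀E (ha.conj hτ) (hb.conj hτ)
  rw [← conjugate_commutatorElement] at h
  simpa [mul_assoc] using hN.conj_mem _ h τ⁻¹

theorem Flexible.mem_of_hasSmallSupport (hG : Flexible G) {N : Subgroup G} (hN : N.Normal)
    {K : Set Cantor} (hK : IsClopen K) (hKne : K.Nonempty) (hKuniv : K ≠ univ)
    (hKN : ∀ u : G, SupportedOn u K → u ∈ N) {v : G} (hv : HasSmallSupport v) : v ∈ N := by
  obtain ⟨S, hS, hSne, hSuniv, hvS⟩ := hv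
  obtain ⟨s, hsG, hsSK⟩ := hG S K hS hSne hSuniv hK hKne hKuniv
  let σ : G := ⟨s, hsG⟩
  have hσ : MapsTo (σ • ·) S K := mapsTo_iff_image_subset.2 hsSK
  have h := hKN _ ((show SupportedOn v S from hvS).conj hσ)
  simpa [mul_assoc] using hN.conj_mem _ h σ⁻¹

end FullFlexible

section Pairs

variable {k f g : Cantor ≃ₜ Cantor}

lemma IsPair.apply_cons_false (h : IsPair k f g) (ζ : Cantor) :
    k (cons false ζ) = cons false (f ζ) := by
  simpa using h.1 ζ

lemma IsPair.apply_cons_true (h : IsPair k f g) (ζ : Cantor) :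
    k (cons true ζ) = cons true (g ζ) := by
  simpa using h.2 ζ

lemma IsPair.symm_apply_cons_false (h : IsPair k f g) (ζ : Cantor) :
    k.symm (cons false ζ) = cons false (f.symm ζ) := by
  simp [Homeomorph.symm_apply_eq, h.apply_cons_false]

lemma IsPair.symm_apply_cons_true (h : IsPair k f g) (ζ : Cantor) :
    k.symm (cons true ζ) = cons true (g.symm ζ) := by
  simp [Homeomorph.symm_apply_eq, h.apply_cons_true]

variable {x₀ : Cantor ≃ₜ Cantor}

lemma IsX0.apply_cons_false_false (h : IsX0 x₀) (ζ : Cantor) :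
    x₀ (cons false (cons false ζ)) = cons false ζ := by
  simpa using h.1 ζ

lemma IsX0.apply_cons_false_true (h : IsX0 x₀) (ζ : Cantor) :
    x₀ (cons false (cons true ζ)) = cons true (cons false ζ) := by
  simpa using h.2.1 ζ

lemma IsX0.apply_cons_true (h : IsX0 x₀) (ζ : Cantor) :
    x₀ (cons true ζ) = cons true (cons true ζ) := by
  simpa using h.2.2 ζ

lemma IsX0.symm_apply_cons_false (h : IsX0 x₀) (ζ : Cantor) :
    x₀.symm (cons false ζ) = cons false (cons false ζ) := by
  simp [Homeomorph.symm_apply_eq, h.apply_cons_false_false]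

lemma IsX0.ne_one (h : IsX0 x₀) : x₀ ≠ 1 := fun h1 => by
  simpa [h1] using congrFun (h.apply_cons_true fun _ => false) 1

lemma semiconjBy_of_isPair {y w W u v : Cantor ≃ₜ Cantor} (hx₀ : IsX0 x₀)
    (hy : IsPair y x₀ 1) (hw : IsPair w v w) (hW : IsPair W 1 w)
    (hu : SupportedOn u (cone [false, true]))
    (huv : ∀ ζ, u (cons false (cons true ζ)) = cons false (cons true (v ζ))) :
    SemiconjBy (y⁻¹ * x₀) (W * u) W := by
  have hu1 : ∀ ζ, u (cons true ζ) = cons true ζ := fun ζ => hu _ (by simp)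
  have hu00 : ∀ ζ, u (cons false (cons false ζ)) = cons false (cons false ζ) :=
    fun ζ => hu _ (by simp)
  have hone : ∀ ζ, (1 : Cantor ≃ₜ Cantor).symm ζ = ζ := fun _ => rfl
  refine Homeomorph.ext fun ψ => ?_
  obtain ⟨b, ζ, rfl⟩ := exists_eq_cons ψ
  cases b
  · obtain ⟨c, ξ, rfl⟩ := exists_eq_cons ζ
    cases c <;> simp [hx₀.apply_cons_false_false, hx₀.apply_cons_false_true,
      hy.symm_apply_cons_false, hy.symm_apply_cons_true, hw.apply_cons_false, hW.apply_cons_false,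
      hW.apply_cons_true, hu00, huv, hone]
  · simp [hx₀.apply_cons_true, hy.symm_apply_cons_true, hw.apply_cons_true, hW.apply_cons_true,
      hu1, hone]

end Pairs

section Restriction

variable {u : Cantor ≃ₜ Cantor}

lemma exists_restriction_mem {G : Subgroup (Cantor ≃ₜ Cantor)}
    (h1c : ∀ k ∈ G, (∀ ψ ∈ cone [true], k ψ = ψ) → ∃ g ∈ G, IsPair k g 1)
    (h1d : ∀ k ∈ G, (∀ ψ ∈ cone [false], k ψ = ψ) → ∃ g ∈ G, IsPair k 1 g)
    (huG : u ∈ G) (hu : SupportedOn u (cone [false, true])) :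
    ∃ v ∈ G, ∀ ζ, u (cons false (cons true ζ)) = cons false (cons true (v ζ)) := by
  obtain ⟨u₁, hu₁G, hu₁⟩ := h1c u huG fun ψ hψ => hu ψ <| by
    obtain ⟨ζ, rfl⟩ := mem_cone_iff.1 hψ
    simp
  obtain ⟨v, hvG, hv⟩ := h1d u₁ hu₁G fun ψ hψ => by
    obtain ⟨ζ, rfl⟩ := mem_cone_iff.1 hψ
    have : u (cons false (cons false ζ)) = cons false (cons false ζ) := hu _ (by simp)
    simpa [hu₁.apply_cons_false] using this
  exact ⟨v, hvG, fun ζ => by simp [hu₁.apply_cons_false, hv.apply_cons_true]⟩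

lemma supportedOn_inv_mul_of_isPair {x₀ y : Cantor ≃ₜ Cantor} (hx₀ : IsX0 x₀) (hy : IsPair y x₀ 1) :
    SupportedOn (y⁻¹ * x₀) (cone [false, false, false])ᶜ := fun ψ hψ => by
  obtain ⟨ζ, rfl⟩ := mem_cone_iff.1 (not_not.1 hψ)
  change y.symm (x₀ _) = _
  simp [hx₀.apply_cons_false_false, hx₀.symm_apply_cons_false, hy.symm_apply_cons_false]

lemma supportedOn_mul_of_isPair {w W : Cantor ≃ₜ Cantor} (hW : IsPair W 1 w)
    (hu : SupportedOn u (cone [false, true])) :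
    SupportedOn (W * u) (cone [false, false, false])ᶜ := fun ψ hψ => by
  obtain ⟨ζ, rfl⟩ := mem_cone_iff.1 (not_not.1 hψ)
  change W (u _) = _
  rw [show u _ = _ from hu _ (by simp)]
  simp [hW.apply_cons_false]

end Restriction

theorem exists_commutatorElement_eq {G : Subgroup (Cantor ≃ₜ Cantor)}
    (h1a : ∀ g ∈ G, ∃ k ∈ G, IsPair k g 1) (h1b : ∀ g ∈ G, ∃ k ∈ G, IsPair k 1 g)
    (h1c : ∀ k ∈ G, (∀ ψ ∈ cone [true], k ψ = ψ) → ∃ g ∈ G, IsPair k g 1)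
    (h1d : ∀ k ∈ G, (∀ ψ ∈ cone [false], k ψ = ψ) → ∃ g ∈ G, IsPair k 1 g)
    (h2 : ∀ g ∈ G, ∃ h ∈ G, IsPair h g h) {x₀ : Cantor ≃ₜ Cantor} (hx₀G : x₀ ∈ G)
    (hx₀ : IsX0 x₀) {u : G} (hu : SupportedOn u (cone [false, true])) :
    ∃ t z : G, SupportedOn t (cone [false, false, false])ᶜ ∧
      SupportedOn z (cone [false, false, false])ᶜ ∧ ⁅t, z⁆ = u := by
  obtain ⟨v, hvG, huv⟩ := exists_restriction_mem h1c h1d u.2 hu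
  obtain ⟨w, hwG, hw⟩ := h2 v hvG
  obtain ⟨W, hWG, hW⟩ := h1b w hwG
  obtain ⟨y, hyG, hy⟩ := h1a x₀ hx₀G
  have hconj := semiconjBy_of_isPair hx₀ hy hw hW hu huv
  refine ⟨⟨y⁻¹ * x₀, G.mul_mem (G.inv_mem hyG) hx₀G⟩, ⟨(W * u)⁻¹, G.inv_mem (G.mul_mem hWG u.2)⟩,
    supportedOn_inv_mul_of_isPair hx₀ hy, (supportedOn_mul_of_isPair hW hu).inv, Subtype.ext ?_⟩
  change ⁅y⁻¹ * x₀, (W * u)⁻¹⁆ = u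
  rw [commutatorElement_def, hconj.inv_right.eq, inv_inv, mul_inv_cancel_right,
    inv_mul_cancel_left]

/-- a full, flexible group of homeomorphisms of the Cantor space that is
closed under the pairing operations, admits `(g, h)`-fixed points, and contains the
first generator `x₀` of Thompson's group `F`, is simple. -/
theorem full_flexible_simple (G : Subgroup (Cantor ≃ₜ Cantor))
    (hfull : Full G) (hflex : Flexible G)
    (h1a : ∀ g ∈ G, ∃ k ∈ G, IsPair k g 1)
    (h1b : ∀ g ∈ G, ∃ k ∈ G, IsPair k 1 g)
    (h1c : ∀ k ∈ G, (∀ ψ ∈ cone [true], k ψ = ψ) → ∃ g ∈ G, IsPair k g 1)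
    (h1d : ∀ k ∈ G, (∀ ψ ∈ cone [false], k ψ = ψ) → ∃ g ∈ G, IsPair k 1 g)
    (h2 : ∀ g ∈ G, ∃ h ∈ G, IsPair h g h)
    (h3 : ∃ x₀ ∈ G, IsX0 x₀) :
    IsSimpleGroup ↥G := by
  obtain ⟨x₀, hx₀G, hx₀⟩ := h3
  have : Nontrivial G := ⟨⟨x₀, hx₀G⟩, 1, fun h => hx₀.ne_one (congrArg Subtype.val h)⟩
  refine ⟨fun N hN => N.bot_or_exists_ne_one.imp_right fun ⟨g₀, hg₀N, hg₀⟩ => ?_⟩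
  obtain ⟨E, hE, hEne, hdisj, hEuniv⟩ :=
    exists_isClopen_disjoint_image_of_ne_one (f := g₀) fun h => hg₀ (Subtype.ext h)
  have hg₀E : MapsTo (g₀ • ·) E Eᶜ :=
    mapsTo_iff_image_subset.2 (subset_compl_iff_disjoint_left.2 hdisj)
  have hI₀₁ : ∀ u : G, SupportedOn u (cone [false, true]) → u ∈ N := fun u hu => by
    obtain ⟨t, z, ht, hz, rfl⟩ := exists_commutatorElement_eq h1a h1b h1c h1d h2 hx₀G hx₀ hu
    exact hflex.commutatorElement_mem hN hg₀N hE hEne (ne_top_of_le_ne_top hEuniv le_sup_left)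
      hg₀E (isClopen_cone _).compl (nonempty_compl.2 (cone_cons_ne_univ _ _))
      (compl_ne_univ.2 (cone_nonempty _)) ht hz
  have hsmall : ∀ v : G, HasSmallSupport v → v ∈ N := fun v hv =>
    hflex.mem_of_hasSmallSupport hN (isClopen_cone _) (cone_nonempty _) (cone_cons_ne_univ _ _)
      hI₀₁ hv
  refine N.eq_top_iff'.2 fun g => ?_
  obtain ⟨a, haG, b, hbG, ha, hb, hab⟩ := hfull.exists_hasSmallSupport_mul_eq g.2
  rw [show g = ⟨a, haG⟩ * ⟨b, hbG⟩ from Subtype.ext hab.symm]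
  exact N.mul_mem (hsmall _ ha) (hsmall _ hb)
end

section
/- Let p be a prime, and let T = (S, s₀, t, o) be any asynchronous binary transducer computing the digit-flipping homeomorphism f_p (which flips every p-th digit of an infinite binary sequence). Then every accessible cycle of T has length divisible by p. That is, if t(s₀, α) = c for some finite word α and t(c, γ) = c for some nonempty finite word γ, then p divides |γ|. -/
/-! If `α` reaches the state `c` and `γ` is a cycle at `c`, then `α` and `αγ` reach the same
state, so from then on the transducer writes the same output on both: `f_p(αω)` read after the
output `β` of `α` agrees with `f_p(αγω)` read after the output `βδ` of `αγ`. Far enough out both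
are `ω` with some digits flipped; testing against the all-`false` sequence and one with a single
`true` shows that `|δ| = |γ|` and that the flipping patterns, shifted against each other by `|γ|`,
coincide, so `p ∣ |γ|`. -/

namespace Transducer

variable {S : Type} (T : Transducer S)

theorem tStar_append (s : S) (u v : List Bool) :
    T.tStar s (u ++ v) = T.tStar (T.tStar s u) v := by
  induction u generalizing s with
  | nil => rfl
  | cons b u ih => simp [tStar, ih]

theorem oStar_append (s : S) (u v : List Bool) :
    T.oStar s (u ++ v) = T.oStar s u ++ T.oStar (T.tStar s u) v := by
  induction u generalizing s with
  | nil => rfl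
  | cons b u ih => simp [oStar, tStar, ih]

theorem oStar_isPrefix_oStar (s : S) {u v : List Bool} (h : u <+: v) :
    T.oStar s u <+: T.oStar s v := by
  obtain ⟨w, rfl⟩ := h
  rw [oStar_append]
  exact List.prefix_append _ _

end Transducer

theorem prefixWord_isPrefix_prefixWord (ψ : Cantor) {m n : ℕ} (h : m ≤ n) :
    prefixWord ψ m <+: prefixWord ψ n := by
  obtain ⟨k, rfl⟩ := Nat.exists_eq_add_of_le h
  simp [prefixWord, List.range_add]

theorem prefixWord_prepend (α : List Bool) (ω : Cantor) (n : ℕ) :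
    prefixWord (prepend α ω) (α.length + n) = α ++ prefixWord ω n := by
  apply List.ext_getElem
  · simp [prefixWord]
  · intro i h1 h2
    simp only [prefixWord, List.getElem_map, List.getElem_range, prepend]
    by_cases h : i < α.length
    · simp [h, List.getElem_append_left, List.get_eq_getElem]
    · rw [dif_neg h, List.getElem_append_right (by omega)]
      simp

theorem prepend_apply_of_length_le (α : List Bool) (ω : Cantor) {n : ℕ} (h : α.length ≤ n) :
    prepend α ω n = ω (n - α.length) := by
  rw [prepend, dif_neg (by omega)]

namespace Transducer.Computes

variable {S : Type} {T : Transducer S} {f : Cantor → Cantor}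

theorem getElem_oStar_tStar (hT : T.Computes f) (α : List Bool) (ω : Cantor) (n i : ℕ)
    (h : i < (T.oStar (T.tStar T.s0 α) (prefixWord ω n)).length) :
    (T.oStar (T.tStar T.s0 α) (prefixWord ω n))[i] =
      f (prepend α ω) ((T.oStar T.s0 α).length + i) := by
  have hpre := (hT (prepend α ω)).1 (α.length + n)
  rw [prefixWord_prepend, oStar_append] at hpre
  have hlen : (T.oStar T.s0 α).length + i <
      (T.oStar T.s0 α ++ T.oStar (T.tStar T.s0 α) (prefixWord ω n)).length := by
    simp only [List.length_append]; omega
  simpa [List.getElem_append_right] using hpre _ hlen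

theorem exists_lt_length_oStar_tStar (hT : T.Computes f) (α : List Bool) (ω : Cantor) (i : ℕ) :
    ∃ n, i < (T.oStar (T.tStar T.s0 α) (prefixWord ω n)).length := by
  obtain ⟨m, hm⟩ := (hT (prepend α ω)).2 ((T.oStar T.s0 α).length + i + 1)
  refine ⟨m, ?_⟩
  have hmono := (T.oStar_isPrefix_oStar T.s0
    (prefixWord_isPrefix_prefixWord (prepend α ω) (Nat.le_add_left m α.length))).length_le
  rw [prefixWord_prepend, oStar_append, List.length_append] at hmono
  omega

theorem apply_prepend_eq_of_tStar_eq (hT : T.Computes f) {α α' : List Bool}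
    (h : T.tStar T.s0 α = T.tStar T.s0 α') (ω : Cantor) (i : ℕ) :
    f (prepend α ω) ((T.oStar T.s0 α).length + i) =
      f (prepend α' ω) ((T.oStar T.s0 α').length + i) := by
  obtain ⟨n, hn⟩ := hT.exists_lt_length_oStar_tStar α ω i
  rw [← hT.getElem_oStar_tStar α ω n i hn, ← hT.getElem_oStar_tStar α' ω n i (h ▸ hn)]
  simp only [h]

end Transducer.Computes

theorem flipFun_prepend_apply (p : ℕ) (α : List Bool) (ω : Cantor) {n : ℕ}
    (h : α.length ≤ n) :
    flipFun p (prepend α ω) n = (decide (p ∣ n + 1) ^^ ω (n - α.length)) := by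
  rw [flipFun, prepend_apply_of_length_le α ω h]
  by_cases hd : p ∣ n + 1 <;> simp [hd]

theorem eq_and_eq_of_forall_xor_apply_eq {c c' : Bool} {x y : ℕ}
    (h : ∀ ω : Cantor, (c ^^ ω x) = (c' ^^ ω y)) : c = c' ∧ x = y := by
  have hc : c = c' := by simpa using h fun _ => false
  subst hc
  refine ⟨rfl, ?_⟩
  simpa [eq_comm] using Bool.xor_right_inj.mp (h fun m => decide (m = x))

theorem dvd_length_of_flipFun_prepend_eq {p : ℕ} (hp : 0 < p) (α γ : List Bool) (L d : ℕ)
    (h : ∀ ω i,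
      flipFun p (prepend α ω) (L + i) = flipFun p (prepend (α ++ γ) ω) (L + d + i)) :
    p ∣ γ.length := by
  have hfar : ∀ i, α.length + γ.length ≤ i →
      decide (p ∣ L + i + 1) = decide (p ∣ L + d + i + 1) ∧
        L + i - α.length = L + d + i - (α.length + γ.length) := fun i hi =>
    eq_and_eq_of_forall_xor_apply_eq fun ω => by
      simpa [flipFun_prepend_apply p _ ω (show α.length ≤ L + i by omega),
        flipFun_prepend_apply p _ ω (show (α ++ γ).length ≤ L + d + i by simp; omega)]
        using h ω i
  have hdg : d = γ.length := by
    have := (hfar _ le_rfl).2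
    omega
  set i := p * (L + α.length + γ.length + 1) - (L + 1)
  have hle : L + α.length + γ.length + 1 ≤ p * (L + α.length + γ.length + 1) :=
    Nat.le_mul_of_pos_left _ hp
  have hdvd : p ∣ L + i + 1 := ⟨L + α.length + γ.length + 1, by omega⟩
  have hdvd' : p ∣ L + i + 1 + γ.length := by
    have := (hfar i (by omega)).1
    rw [hdg] at this
    simpa [hdvd, show L + γ.length + i + 1 = L + i + 1 + γ.length by omega] using this
  exact (Nat.dvd_add_right hdvd).mp hdvd'

theorem flip_cycles_divisible_general (p : ℕ) (hp : p.Prime) {S : Type}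
    (T : Transducer S) (hT : T.Computes (flipFun p)) :
    ∀ α γ : List Bool, γ ≠ [] → T.tStar (T.tStar T.s0 α) γ = T.tStar T.s0 α →
      p ∣ γ.length := by
  intro α γ _ hcyc
  have hstate : T.tStar T.s0 α = T.tStar T.s0 (α ++ γ) := by
    rw [T.tStar_append, hcyc]
  refine dvd_length_of_flipFun_prepend_eq hp.pos α γ (T.oStar T.s0 α).length
    (T.oStar (T.tStar T.s0 α) γ).length fun ω i => ?_
  simpa [T.oStar_append, Nat.add_assoc] using hT.apply_prepend_eq_of_tStar_eq hstate ω i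

/-- every accessible cycle of a transducer computing the digit-flipping
homeomorphism `f_p` has length divisible by `p`. -/
theorem flip_cycles_divisible (p : ℕ) (hp : p.Prime) {S : Type} [Fintype S]
    (T : Transducer S) (hT : T.Computes (flipFun p)) :
    ∀ α γ : List Bool, γ ≠ [] → T.tStar (T.tStar T.s0 α) γ = T.tStar T.s0 α →
      p ∣ γ.length :=
  flip_cycles_divisible_general p hp T hT
end
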